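/- arXiv:1802.05704 — 5 statements merged into one kernel-verified Lean document; each statement's English description precedes it below -/
import Mathlib

section
/- Let M be a locally compact metric space and let φ : M × ℝ → M be a flow. Then φ is dissipative if and only if φ possesses a global attractor, i.e. a compact invariant set K which is stable and whose region of attraction A(K) is all of M. -/
open Set Metric Filter Topology Bornology

section Defs

variable {M : Type*} [TopologicalSpace M]

/-- A (continuous) flow on a topological space. -/
def IsFlow (φ : M → ℝ → M) : Prop :=
  Continuous (fun p : M × ℝ => φ p.1 p.2) ∧
    (∀ x, φ x 0 = x) ∧ ∀ x s t, φ (φ x s) t = φ x (s + t)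

/-- A set `S` is invariant for the flow `φ` if `φ(S,t) = S` for every `t`. -/
def FlowInvariant (φ : M → ℝ → M) (S : Set M) : Prop :=
  ∀ t : ℝ, (fun x => φ x t) '' S = S

/-- The omega-limit set `ω(x) = ⋂_{t>0} cl (φ(x,[t,∞)))`. -/
def omegaLimitSet (φ : M → ℝ → M) (x : M) : Set M :=
  ⋂ t ∈ Ioi (0 : ℝ), closure (φ x '' Ici t)

/-- The negative omega-limit set `ω*(x) = ⋂_{t<0} cl (φ(x,(-∞,t]))`. -/
def negOmegaLimitSet (φ : M → ℝ → M) (x : M) : Set M :=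
  ⋂ t ∈ Iio (0 : ℝ), closure (φ x '' Iic t)

/-- A flow is dissipative if every omega-limit set is nonempty and the closure of the
union of all omega-limit sets is compact. -/
def Dissipative (φ : M → ℝ → M) : Prop :=
  (∀ x, (omegaLimitSet φ x).Nonempty) ∧
    IsCompact (closure (⋃ x, omegaLimitSet φ x))

/-- `K` is stable: every neighborhood `U` of `K` contains a neighborhood `V` of `K`
with `φ(V,[0,∞)) ⊆ U`. -/
def FlowStable (φ : M → ℝ → M) (K : Set M) : Prop :=
  ∀ U ∈ nhdsSet K, ∃ V ∈ nhdsSet K, ∀ x ∈ V, ∀ t : ℝ, 0 ≤ t → φ x t ∈ U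

/-- `K` is negatively stable: every neighborhood `U` of `K` contains a neighborhood `V`
of `K` with `φ(V,(-∞,0]) ⊆ U`. -/
def FlowNegStable (φ : M → ℝ → M) (K : Set M) : Prop :=
  ∀ U ∈ nhdsSet K, ∃ V ∈ nhdsSet K, ∀ x ∈ V, ∀ t : ℝ, t ≤ 0 → φ x t ∈ U

/-- The region of attraction `A(K) = {x : ∅ ≠ ω(x) ⊆ K}`. -/
def attractionRegion (φ : M → ℝ → M) (K : Set M) : Set M :=
  {x | (omegaLimitSet φ x).Nonempty ∧ omegaLimitSet φ x ⊆ K}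

/-- The region of repulsion `R(K) = {x : ∅ ≠ ω*(x) ⊆ K}`. -/
def repulsionRegion (φ : M → ℝ → M) (K : Set M) : Set M :=
  {x | (negOmegaLimitSet φ x).Nonempty ∧ negOmegaLimitSet φ x ⊆ K}

/-- An attractor: a compact invariant stable set which is attracting, i.e. its region of
attraction is a neighborhood of it. -/
def IsAttractor (φ : M → ℝ → M) (K : Set M) : Prop :=
  IsCompact K ∧ FlowInvariant φ K ∧ FlowStable φ K ∧
    attractionRegion φ K ∈ nhdsSet K

/-- A repeller: a compact invariant negatively stable set which is repelling. -/
def IsRepeller (φ : M → ℝ → M) (K : Set M) : Prop :=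
  IsCompact K ∧ FlowInvariant φ K ∧ FlowNegStable φ K ∧
    repulsionRegion φ K ∈ nhdsSet K

/-- A global attractor: a compact invariant stable set whose region of attraction is the
whole space. -/
def IsGlobalAttractor (φ : M → ℝ → M) (K : Set M) : Prop :=
  IsCompact K ∧ FlowInvariant φ K ∧ FlowStable φ K ∧
    attractionRegion φ K = univ

/-- `N` is an isolating neighborhood of `K`: a compact neighborhood of `K` such that `K`
is the maximal invariant set contained in `N`. -/
def IsIsolatingNbhd (φ : M → ℝ → M) (N K : Set M) : Prop :=
  IsCompact N ∧ K ⊆ interior N ∧ FlowInvariant φ K ∧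
    ∀ S : Set M, FlowInvariant φ S → S ⊆ N → S ⊆ K

/-- An isolated invariant set: a compact invariant set having an isolating neighborhood. -/
def IsIsolatedInvariant (φ : M → ℝ → M) (K : Set M) : Prop :=
  IsCompact K ∧ FlowInvariant φ K ∧ ∃ N, IsIsolatingNbhd φ N K

/-- A parametrized family of flows `(φ_λ)_{λ ∈ [0,1]}`: jointly continuous on
`[0,1] × M × ℝ` and each `φ_λ` is a flow. -/
def IsParamFlow (φ : ℝ → M → ℝ → M) : Prop :=
  ContinuousOn (fun p : ℝ × M × ℝ => φ p.1 p.2.1 p.2.2)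
      ((Icc 0 1 : Set ℝ) ×ˢ (univ : Set (M × ℝ))) ∧
    ∀ l ∈ Icc (0 : ℝ) 1, IsFlow (φ l)

/-- `(K_λ)_{λ ∈ J}` is a continuation: each `K_λ` is an isolated invariant set of `φ_λ`
and every isolating neighborhood of `K_{λ₀}` remains an isolating neighborhood of `K_λ`
for `λ` near `λ₀` in `J`. -/
def IsContinuation (φ : ℝ → M → ℝ → M) (J : Set ℝ) (K : ℝ → Set M) : Prop :=
  (∀ l ∈ J, IsIsolatedInvariant (φ l) (K l)) ∧
    ∀ l₀ ∈ J, ∀ N : Set M, IsIsolatingNbhd (φ l₀) N (K l₀) →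
      ∃ δ > 0, ∀ l ∈ J, |l - l₀| < δ → IsIsolatingNbhd (φ l) N (K l)

/-- The family `(φ_λ)` is uniformly dissipative. -/
def UniformlyDissipative (φ : ℝ → M → ℝ → M) : Prop :=
  (∀ l ∈ Icc (0 : ℝ) 1, ∀ x, (omegaLimitSet (φ l) x).Nonempty) ∧
    IsCompact (closure (⋃ l ∈ Icc (0 : ℝ) 1, ⋃ x, omegaLimitSet (φ l) x))

end Defs

section NormedDefs

variable {E : Type*} [NormedAddCommGroup E]

/-- A coercive family of dissipative flows: for every continuation of the global
attractor of `φ₀`, the regions of attraction are bounded for all small `λ > 0`. -/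
def CoerciveFamily (φ : ℝ → E → ℝ → E) : Prop :=
  ∀ lam1 ∈ Ioc (0 : ℝ) 1, ∀ K : ℝ → Set E,
    IsContinuation φ (Icc 0 lam1) K → IsGlobalAttractor (φ 0) (K 0) →
      ∃ lam0, 0 < lam0 ∧ lam0 ≤ lam1 ∧ ∀ l, 0 < l → l < lam0 →
        IsBounded (attractionRegion (φ l) (K l))

/-- A polar family of dissipative flows: it has arbitrarily large bounded trajectories. -/
def PolarFamily (φ : ℝ → E → ℝ → E) : Prop :=
  ∀ L > 0, ∃ lam0 > 0, ∀ l, 0 < l → l < lam0 → l ≤ 1 →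
    ∃ x : E, IsBounded (range (φ l x)) ∧
      ∃ tl < (0 : ℝ), ∀ t < tl, L < ‖φ l x t‖

/-- The set of points whose trajectory tends to infinity in negative time
(the region of repulsion of the point at infinity). -/
def escapeRegion (φ : ℝ → E → ℝ → E) (l : ℝ) : Set E :=
  {x | Tendsto (fun t => ‖φ l x t‖) atBot atTop}

/-- The complementary isolated invariant set
`C_λ = ℝⁿ ∖ (A_λ(K_λ) ∪ R_λ(∞))`. -/
def complementarySet (φ : ℝ → E → ℝ → E) (K : ℝ → Set E) (l : ℝ) : Set E :=
  (attractionRegion (φ l) (K l) ∪ escapeRegion φ l)ᶜ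

end NormedDefs

/-!
Let `Ω` be the closure of the union of all ω-limit sets and `W` a compact set whose interior
contains `Ω`. Every orbit enters `int W` at arbitrarily late times, so by compactness there is a
uniform `T` such that every point of `W` returns to `W` within time `[1, T]`; hence the whole
forward orbit of `W` lies in the compact set `φ(W × [0, T])`. The ω-limit `K` of the set `W` is
then compact, invariant and absorbs `W`, and it contains every `ω(x)`. Stability follows because
`K` lies in the open forward orbit of `int W`: a point of `K` has its backward orbit in `K`, and
the forward orbit of a cluster point of that backward orbit enters `int W`.
-/

open omegaLimit

namespace Flow

variable {α : Type*} [TopologicalSpace α] (Φ : Flow ℝ α)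

theorem isOpen_image2 (u : Set ℝ) {O : Set α} (hO : IsOpen O) : IsOpen (image2 Φ u O) := by
  rw [← iUnion_image_left]
  exact isOpen_biUnion fun t _ => (Φ.toHomeomorph t).isOpenMap O hO

theorem exists_uniform_return {W O : Set α} (hW : IsCompact W) (hO : IsOpen O)
    (hret : ∀ x ∈ W, ∃ᶠ t in atTop, Φ t x ∈ O) :
    ∃ T, ∀ x ∈ W, ∃ s ∈ Icc 1 T, Φ s x ∈ O := by
  have hcover : W ⊆ ⋃ n : ℕ, ⋃ s ∈ Icc (1 : ℝ) n, Φ s ⁻¹' O := by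
    intro x hx
    obtain ⟨s, hsO, hs⟩ := ((hret x hx).and_eventually (eventually_ge_atTop 1)).exists
    obtain ⟨n, hn⟩ := exists_nat_ge s
    exact mem_iUnion.2 ⟨n, mem_biUnion ⟨hs, hn⟩ hsO⟩
  obtain ⟨n, hn⟩ := hW.elim_directed_cover _
    (fun n => isOpen_biUnion fun s _ => hO.preimage (Φ.continuous_toFun s)) hcover
    (Monotone.directed_le fun m n hmn =>
      biUnion_subset_biUnion_left (Icc_subset_Icc_right (by exact_mod_cast hmn)))
  exact ⟨n, fun x hx => by simpa using hn hx⟩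

theorem image2_Ici_subset_image2_Icc {W : Set α} {T : ℝ}
    (hret : ∀ x ∈ W, ∃ s ∈ Icc 1 T, Φ s x ∈ W) :
    image2 Φ (Ici 0) W ⊆ image2 Φ (Icc 0 T) W := by
  suffices h : ∀ n : ℕ, ∀ x ∈ W, ∀ t ∈ Icc (0 : ℝ) n, Φ t x ∈ image2 Φ (Icc 0 T) W by
    rintro _ ⟨t, ht, x, hx, rfl⟩
    obtain ⟨n, hn⟩ := exists_nat_ge t
    exact h n x hx t ⟨ht, hn⟩
  intro n
  induction n with
  | zero =>
    intro x hx t ht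
    obtain ⟨s, hs, -⟩ := hret x hx
    obtain ⟨ht0, htn⟩ := ht
    push_cast at htn
    exact ⟨t, ⟨ht0, by linarith [hs.1, hs.2]⟩, x, hx, rfl⟩
  | succ n ih =>
    intro x hx t ht
    by_cases htT : t ≤ T
    · exact ⟨t, ⟨ht.1, htT⟩, x, hx, rfl⟩
    obtain ⟨s, hs, hsW⟩ := hret x hx
    rw [show t = (t - s) + s by ring, Φ.map_add]
    exact ih _ hsW _ ⟨by linarith [hs.2], by push_cast at ht; linarith [ht.2, hs.1]⟩

theorem exists_isCompact_superset_image2_Ici {W : Set α} (hW : IsCompact W)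
    (hret : ∀ x ∈ W, ∃ᶠ t in atTop, Φ t x ∈ interior W) :
    ∃ C, IsCompact C ∧ image2 Φ (Ici 0) W ⊆ C := by
  obtain ⟨T, hT⟩ := Φ.exists_uniform_return hW isOpen_interior hret
  refine ⟨image2 Φ (Icc 0 T) W, ?_, Φ.image2_Ici_subset_image2_Icc fun x hx =>
    (hT x hx).imp fun _ hs => ⟨hs.1, interior_subset hs.2⟩⟩
  rw [← image_uncurry_prod]
  exact (isCompact_Icc.prod hW).image Φ.cont'

theorem isCompact_omegaLimit_of_image2_Ici_subset [T2Space α] {W C : Set α} (hC : IsCompact C)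
    (hWC : image2 Φ (Ici 0) W ⊆ C) : IsCompact (ω⁺ Φ W) :=
  hC.of_isClosed_subset (isClosed_omegaLimit _ _ _)
    ((omegaLimit_subset_closure_image2 _ _ _ (Ici_mem_atTop 0)).trans
      (closure_minimal hWC hC.isClosed))

theorem eventually_mapsTo_image2_Ici {W U : Set α} (h : ∀ᶠ t in atTop, MapsTo (Φ t) W U) :
    ∀ᶠ t in atTop, MapsTo (Φ t) (image2 Φ (Ici 0) W) U := by
  obtain ⟨T, hT⟩ := eventually_atTop.1 h
  filter_upwards [eventually_ge_atTop T] with t ht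
  rintro _ ⟨s, hs, x, hx, rfl⟩
  rw [← Φ.map_add]
  exact hT _ (by linarith [mem_Ici.1 hs]) hx

theorem subset_image2_Ici_of_isCompact_of_isInvariant {K O : Set α} (hK : IsCompact K)
    (hKinv : IsInvariant Φ K) (hO : IsOpen O) (hKO : ∀ x ∈ K, ∃ t, Φ t x ∈ O) :
    K ⊆ image2 Φ (Ici 0) O := by
  intro y hy
  obtain ⟨a, haK, ha⟩ := hK.exists_mapClusterPt (f := atBot) (u := fun t => Φ t y)
    (le_principal_iff.2 (mem_map.2 (univ_mem' fun t => hKinv t hy)))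
  obtain ⟨u, hu⟩ := hKO a haK
  have hfreq : ∃ᶠ t in atBot, Φ u (Φ t y) ∈ O :=
    mapClusterPt_iff_frequently.1 ha _ ((hO.preimage (Φ.continuous_toFun u)).mem_nhds hu)
  obtain ⟨t, htO, ht⟩ := (hfreq.and_eventually (eventually_le_atBot (-u))).exists
  refine ⟨-(u + t), by simp only [mem_Ici]; linarith, Φ (u + t) y, by rwa [Φ.map_add], ?_⟩
  rw [← Φ.map_add, neg_add_cancel, Φ.map_zero_apply]

theorem flowStable_of_eventually_mapsTo {K N : Set α} (hK : IsCompact K)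
    (hKinv : IsInvariant Φ K) (hN : N ∈ 𝓝ˢ K)
    (habs : ∀ U, IsOpen U → K ⊆ U → ∀ᶠ t in atTop, MapsTo (Φ t) N U) :
    FlowStable (fun x t => Φ t x) K := by
  intro U hU
  obtain ⟨U', hU'o, hKU', hU'U⟩ := mem_nhdsSet_iff_exists.1 hU
  obtain ⟨T, hT⟩ := eventually_atTop.1 (habs U' hU'o hKU')
  obtain ⟨V, I, hVo, -, hKV, hTI, hVU⟩ :=
    generalized_tube_lemma hK (isCompact_Icc (a := 0) (b := T))
      (hU'o.preimage (Φ.continuous continuous_snd continuous_fst))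
      (by rintro ⟨x, t⟩ ⟨hx, -⟩; exact hKU' (hKinv t hx))
  refine ⟨V ∩ N, inter_mem (hVo.mem_nhdsSet.2 hKV) hN, fun x hx t ht => hU'U ?_⟩
  rcases le_total t T with htT | hTt
  · exact hVU (mk_mem_prod hx.1 (hTI ⟨ht, htT⟩))
  · exact hT t hTt hx.2

end Flow

section

variable {M : Type*} [TopologicalSpace M] {φ : M → ℝ → M}

def IsFlow.toFlow (hφ : IsFlow φ) : Flow ℝ M where
  toFun t x := φ x t
  cont' := hφ.1.comp continuous_swap
  map_add' t₁ t₂ x := by rw [hφ.2.2, add_comm]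
  map_zero' := hφ.2.1

theorem IsFlow.flowInvariant_of_isInvariant (hφ : IsFlow φ) {S : Set M}
    (h : IsInvariant hφ.toFlow S) : FlowInvariant φ S :=
  (hφ.toFlow.isInvariant_iff_image_eq S).1 h

theorem omegaLimitSet_eq_omegaLimit (φ : M → ℝ → M) (x : M) :
    omegaLimitSet φ x = ω⁺ (fun t y => φ y t) {x} := by
  ext y
  rw [mem_omegaLimit_singleton_iff_mapClusterPt, mapClusterPt_atTop_iff_forall_mem_closure]
  simp only [omegaLimitSet, mem_iInter₂, mem_Ioi]
  refine ⟨fun h t => ?_, fun h t _ => h t⟩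
  exact closure_mono (image_mono (Ici_subset_Ici.2 (le_max_left t 1)))
    (h _ (lt_max_of_lt_right one_pos))

theorem frequently_mem_of_mem_omegaLimitSet {x p : M} (hp : p ∈ omegaLimitSet φ x) {U : Set M}
    (hU : U ∈ 𝓝 p) : ∃ᶠ t in atTop, φ x t ∈ U := by
  rw [omegaLimitSet_eq_omegaLimit, mem_omegaLimit_singleton_iff_mapClusterPt] at hp
  exact mapClusterPt_iff_frequently.1 hp U hU

theorem IsFlow.omegaLimitSet_subset_omegaLimit (hφ : IsFlow φ) {x : M} {s : ℝ} {W : Set M}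
    (hx : φ x s ∈ W) : omegaLimitSet φ x ⊆ ω⁺ hφ.toFlow W :=
  calc omegaLimitSet φ x = ω⁺ hφ.toFlow (hφ.toFlow s '' {x}) :=
        (omegaLimitSet_eq_omegaLimit φ x).trans
          (hφ.toFlow.omegaLimit_image_eq _ _
            (fun t => tendsto_atTop_add_const_right _ t tendsto_id) s).symm
    _ ⊆ ω⁺ hφ.toFlow W :=
        omegaLimit_mono_right _ _ (by rw [image_singleton, singleton_subset_iff]; exact hx)

theorem IsFlow.isGlobalAttractor_omegaLimit [T2Space M] (hφ : IsFlow φ) {W : Set M}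
    (hW : IsCompact W) (hne : ∀ x, (omegaLimitSet φ x).Nonempty)
    (hωW : ∀ x, omegaLimitSet φ x ⊆ interior W) :
    IsGlobalAttractor φ (ω⁺ hφ.toFlow W) := by
  set Φ := hφ.toFlow
  have hret : ∀ x, ∃ᶠ t in atTop, Φ t x ∈ interior W := fun x =>
    let ⟨_, hp⟩ := hne x
    frequently_mem_of_mem_omegaLimitSet hp (isOpen_interior.mem_nhds (hωW x hp))
  obtain ⟨C, hC, hWC⟩ := Φ.exists_isCompact_superset_image2_Ici hW fun x _ => hret x
  have hK : IsCompact (ω⁺ Φ W) := Φ.isCompact_omegaLimit_of_image2_Ici_subset hC hWC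
  have hinv : IsInvariant Φ (ω⁺ Φ W) :=
    Φ.isInvariant_omegaLimit _ _ fun t => tendsto_atTop_add_const_left _ t tendsto_id
  have habs : ∀ U, IsOpen U → ω⁺ Φ W ⊆ U → ∀ᶠ t in atTop, MapsTo (Φ t) W U :=
    fun U hU hKU => eventually_mapsTo_of_isCompact_absorbing_of_isOpen_of_omegaLimit_subset _ _ _ hC
      ((eventually_ge_atTop 0).mono fun t ht x hx => hWC ⟨t, ht, x, hx, rfl⟩) hU hKU
  have hKN : ω⁺ Φ W ⊆ image2 Φ (Ici 0) (interior W) :=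
    Φ.subset_image2_Ici_of_isCompact_of_isInvariant hK hinv isOpen_interior fun x _ =>
      (hret x).exists
  refine ⟨hK, hφ.flowInvariant_of_isInvariant hinv, ?_, ?_⟩
  · refine Φ.flowStable_of_eventually_mapsTo hK hinv
      ((Φ.isOpen_image2 _ isOpen_interior).mem_nhdsSet.2 hKN) fun U hU hKU => ?_
    exact Φ.eventually_mapsTo_image2_Ici
      ((habs U hU hKU).mono fun t ht => ht.mono_left interior_subset)
  · refine eq_univ_of_forall fun x => ⟨hne x, ?_⟩
    obtain ⟨s, hs⟩ := (hret x).exists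
    exact hφ.omegaLimitSet_subset_omegaLimit (interior_subset hs)

theorem Dissipative.of_attractionRegion_eq_univ [T2Space M] {K : Set M} (hK : IsCompact K)
    (hA : attractionRegion φ K = univ) : Dissipative φ := by
  have hx : ∀ x, x ∈ attractionRegion φ K := fun x => hA ▸ mem_univ x
  exact ⟨fun x => (hx x).1, hK.of_isClosed_subset isClosed_closure
    (closure_minimal (iUnion_subset fun x => (hx x).2) hK.isClosed)⟩

end

/-- Pliss. A flow on a locally compact metric space is dissipative
if and only if it possesses a global attractor, i.e. a compact invariant stable set
whose region of attraction is the whole space. -/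
theorem dissipative_iff_exists_globalAttractor
    {M : Type*} [MetricSpace M] [LocallyCompactSpace M]
    (φ : M → ℝ → M) (hφ : IsFlow φ) :
    Dissipative φ ↔
      ∃ K : Set M, IsCompact K ∧ FlowInvariant φ K ∧ FlowStable φ K ∧
        attractionRegion φ K = univ := by
  constructor
  · rintro ⟨hne, hΩ⟩
    obtain ⟨W, hW, hΩW⟩ := exists_compact_superset hΩ
    exact ⟨_, hφ.isGlobalAttractor_omegaLimit hW hne fun x =>
      (subset_iUnion _ x).trans (subset_closure.trans hΩW)⟩
  · rintro ⟨K, hK, -, -, hA⟩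
    exact Dissipative.of_attractionRegion_eq_univ hK hA
end

section
/- Let M be a noncompact, locally compact metric space and let φ : M × ℝ → M be a flow. Extend φ to a map φ̂ on the one-point compactification M ∪ {∞} by setting φ̂(∞,t) = ∞ for all t. Then φ̂ is a (continuous) flow on M ∪ {∞}, and φ is dissipative if and only if {∞} is a repeller of φ̂. -/
open Set Metric Filter Topology Bornology

/-- The extension of a flow on `M` to the one-point compactification `M ∪ {∞}`,
leaving `∞` fixed. -/
def onePointExtension {M : Type*} (φ : M → ℝ → M) (x : OnePoint M) (t : ℝ) :
    OnePoint M :=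
  Option.map (fun y => φ y t) x

/-!
Negative stability of `{∞}` for the extended flow says that forward orbits of compact subsets of
`M` stay in compact sets, and `{∞}` repels iff, outside some compact set, every point `x` has
`ω*(x) ⊆ {∞}`. For a dissipative flow take a compact neighbourhood `W` of `cl ⋃ ω(x)`: if orbits
from `W` left `W` for longer and longer times, a cluster point of their last exit points would
never return to `interior W`, although its own ω-limit set lies there. Moreover `ω*(x)` is closed
and invariant, so it contains `ω(z)` for each of its points `z` and thus meets `interior W`; points
whose backward orbit never enters `W` therefore have `ω*(x) ⊆ {∞}`. Conversely, if `{∞}` is a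
repeller then forward orbits are relatively compact, so each `ω(x)` is a nonempty compact invariant
set, on which every `z` has a nonempty `ω*(z)` inside `M`; hence `⋃ ω(x)` avoids the repulsion
region of `∞` and lies in a compact set.
-/

open OnePoint

section LimitSets

variable {Y : Type*} [TopologicalSpace Y] {φ : Y → ℝ → Y} {x z : Y} {S : Set Y}

theorem IsFlow.continuous_left (hφ : IsFlow φ) (t : ℝ) : Continuous fun y => φ y t :=
  hφ.1.comp (continuous_id.prodMk continuous_const)

theorem IsFlow.continuous_right (hφ : IsFlow φ) (y : Y) : Continuous (φ y) :=
  hφ.1.comp (continuous_const.prodMk continuous_id)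

theorem IsFlow.flow_flow_neg (hφ : IsFlow φ) (y : Y) (t : ℝ) : φ (φ y t) (-t) = y := by
  rw [hφ.2.2, add_neg_cancel, hφ.2.1]

theorem mem_omegaLimitSet_iff_mapClusterPt :
    z ∈ omegaLimitSet φ x ↔ MapClusterPt z atTop (φ x) := by
  rw [mapClusterPt_atTop_iff_forall_mem_closure, omegaLimitSet, mem_iInter₂]
  refine ⟨fun h t => ?_, fun h t _ => h t⟩
  exact closure_mono (image_mono (Ici_subset_Ici.2 (le_max_left t 1))) (h _ (by simp))

theorem mem_negOmegaLimitSet_iff_mapClusterPt :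
    z ∈ negOmegaLimitSet φ x ↔ MapClusterPt z atBot (φ x) := by
  rw [MapClusterPt, (atBot_basis.map _).clusterPt_iff_forall_mem_closure, negOmegaLimitSet,
    mem_iInter₂]
  refine ⟨fun h t _ => ?_, fun h t _ => h t trivial⟩
  exact closure_mono (image_mono (Iic_subset_Iic.2 (min_le_left t (-1)))) (h _ (by simp))

theorem isClosed_omegaLimitSet : IsClosed (omegaLimitSet φ x) :=
  isClosed_biInter fun _ _ => isClosed_closure

theorem isClosed_negOmegaLimitSet : IsClosed (negOmegaLimitSet φ x) :=
  isClosed_biInter fun _ _ => isClosed_closure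

theorem IsClosed.omegaLimitSet_subset (hS : IsClosed S) (h : ∀ᶠ t in atTop, φ x t ∈ S) :
    omegaLimitSet φ x ⊆ S :=
  fun _ hz => hS.mem_of_mapClusterPt (mem_omegaLimitSet_iff_mapClusterPt.1 hz) h

theorem omegaLimitSet_nonempty_of_isCompact (hS : IsCompact S)
    (h : ∀ᶠ t in atTop, φ x t ∈ S) : (omegaLimitSet φ x).Nonempty :=
  let ⟨z, _, hz⟩ := hS.exists_mapClusterPt (tendsto_principal.2 h)
  ⟨z, mem_omegaLimitSet_iff_mapClusterPt.2 hz⟩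

theorem negOmegaLimitSet_nonempty_of_isCompact (hS : IsCompact S)
    (h : ∀ᶠ t in atBot, φ x t ∈ S) : (negOmegaLimitSet φ x).Nonempty :=
  let ⟨z, _, hz⟩ := hS.exists_mapClusterPt (tendsto_principal.2 h)
  ⟨z, mem_negOmegaLimitSet_iff_mapClusterPt.2 hz⟩

theorem IsFlow.mapClusterPt_flow (hφ : IsFlow φ) {l : Filter ℝ} {s : ℝ}
    (hl : Tendsto (· + s) l l) (hz : MapClusterPt z l (φ x)) : MapClusterPt (φ z s) l (φ x) := by
  refine .of_comp hl ?_
  have := hz.continuousAt_comp (hφ.continuous_left s).continuousAt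
  rwa [show ((fun y => φ y s) ∘ φ x) = φ x ∘ (· + s) from funext fun u => hφ.2.2 x u s] at this

theorem IsFlow.flow_mem_omegaLimitSet (hφ : IsFlow φ) (hz : z ∈ omegaLimitSet φ x) (s : ℝ) :
    φ z s ∈ omegaLimitSet φ x := by
  rw [mem_omegaLimitSet_iff_mapClusterPt] at hz ⊢
  exact hφ.mapClusterPt_flow (tendsto_atTop_add_const_right _ s tendsto_id) hz

theorem IsFlow.flow_mem_negOmegaLimitSet (hφ : IsFlow φ) (hz : z ∈ negOmegaLimitSet φ x)
    (s : ℝ) : φ z s ∈ negOmegaLimitSet φ x := by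
  rw [mem_negOmegaLimitSet_iff_mapClusterPt] at hz ⊢
  exact hφ.mapClusterPt_flow (tendsto_atBot_add_const_right _ s tendsto_id) hz

theorem IsFlow.omegaLimitSet_subset_negOmegaLimitSet (hφ : IsFlow φ)
    (hz : z ∈ negOmegaLimitSet φ x) : omegaLimitSet φ z ⊆ negOmegaLimitSet φ x :=
  isClosed_negOmegaLimitSet.omegaLimitSet_subset
    (.of_forall (hφ.flow_mem_negOmegaLimitSet hz))

end LimitSets

section Dissipative

variable {Y : Type*} [TopologicalSpace Y] {φ : Y → ℝ → Y} {x : Y} {t : ℝ} {K D W : Set Y}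

theorem IsFlow.flow_notMem_of_forall_flow_mem (hφ : IsFlow φ)
    (hKD : ∀ y ∈ K, ∀ s, 0 ≤ s → φ y s ∈ D) (hx : x ∉ D) (ht : t ≤ 0) : φ x t ∉ K :=
  fun h => hx (hφ.flow_flow_neg x t ▸ hKD _ h (-t) (by linarith))

/-- Take for `y` the last point of the orbit segment `φ(x, [0, t])` that lies in `W`. -/
theorem IsFlow.exists_forall_flow_notMem (hφ : IsFlow φ) (hW : IsClosed W) (hx : x ∈ W)
    (ht : 0 ≤ t) {T : ℝ} (hT : φ x t ∉ (fun p : Y × ℝ => φ p.1 p.2) '' (W ×ˢ Icc 0 T)) :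
    ∃ y ∈ W, ∀ s, 0 < s → s ≤ T → φ y s ∉ W := by
  obtain ⟨u, ⟨⟨hu0, hut⟩, huW⟩, hmax⟩ :=
    (isCompact_Icc.inter_right (hW.preimage (hφ.continuous_right x))).exists_isGreatest
      ⟨0, ⟨le_rfl, ht⟩, show φ x 0 ∈ W by rwa [hφ.2.1]⟩
  refine ⟨φ x u, huW, fun s hs hsT hsW => ?_⟩
  rw [hφ.2.2] at hsW
  by_cases hst : u + s ≤ t
  · linarith [hmax ⟨⟨by linarith, hst⟩, hsW⟩]
  · refine hT ⟨(φ x u, t - u), ⟨huW, by linarith, by linarith⟩, ?_⟩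
    simp only [hφ.2.2, add_sub_cancel]

theorem IsFlow.exists_forall_flow_notMem_interior (hφ : IsFlow φ) (hW : IsCompact W)
    {y : ℕ → Y} (hyW : ∀ n, y n ∈ W) (hy : ∀ (n : ℕ) (s : ℝ), 0 < s → s ≤ n → φ (y n) s ∉ W) :
    ∃ z ∈ W, ∀ s, 0 < s → φ z s ∉ interior W := by
  obtain ⟨z, hzW, hz⟩ :=
    hW.exists_mapClusterPt (f := (atTop : Filter ℕ)) (tendsto_principal.2 (.of_forall hyW))
  refine ⟨z, hzW, fun s hs hsW => ?_⟩
  have hfreq : ∃ᶠ n in atTop, φ (y n) s ∈ interior W :=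
    hz.frequently ((hφ.continuous_left s).continuousAt.eventually_mem
      (isOpen_interior.mem_nhds hsW))
  obtain ⟨n, hnW, hn⟩ := (hfreq.and_eventually (eventually_ge_atTop ⌈s⌉₊)).exists
  exact hy n s hs (Nat.ceil_le.1 hn) (interior_subset hnW)

theorem Dissipative.exists_isCompact_forall_flow_mem [T2Space Y] [WeaklyLocallyCompactSpace Y]
    (hφ : IsFlow φ) (hd : Dissipative φ) (hK : IsCompact K) :
    ∃ D, IsCompact D ∧ ∀ x ∈ K, ∀ t, 0 ≤ t → φ x t ∈ D := by
  obtain ⟨W, hWc, hW⟩ := exists_compact_superset (hd.2.union hK)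
  by_contra! hcon
  have hexit (n : ℕ) : ∃ y ∈ W, ∀ s : ℝ, 0 < s → s ≤ n → φ y s ∉ W := by
    obtain ⟨x, hx, t, ht, hxt⟩ := hcon _ ((hWc.prod isCompact_Icc).image hφ.1)
    exact hφ.exists_forall_flow_notMem hWc.isClosed (interior_subset (hW (Or.inr hx))) ht hxt
  choose y hyW hy using hexit
  obtain ⟨z, -, hz⟩ := hφ.exists_forall_flow_notMem_interior hWc hyW hy
  obtain ⟨w, hw⟩ := hd.1 z
  have hwW : w ∈ interior W := hW (Or.inl (subset_closure (mem_iUnion_of_mem z hw)))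
  obtain ⟨s, hsW, hs⟩ := ((mem_omegaLimitSet_iff_mapClusterPt.1 hw).frequently
    (isOpen_interior.mem_nhds hwW) |>.and_eventually (eventually_gt_atTop 0)).exists
  exact hz s hs hsW

end Dissipative

section OnePointExtension

@[simp]
theorem onePointExtension_coe {M : Type*} (φ : M → ℝ → M) (x : M) (t : ℝ) :
    onePointExtension φ x t = φ x t := rfl

theorem onePointExtension_infty {M : Type*} (φ : M → ℝ → M) :
    onePointExtension φ ∞ = fun _ => ∞ := rfl

variable {M : Type*} [TopologicalSpace M] {φ : M → ℝ → M}

theorem OnePoint.compl_image_coe_mem_nhds_infty [T2Space M] {D : Set M} (hD : IsCompact D) :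
    ((↑) '' D : Set (OnePoint M))ᶜ ∈ 𝓝 ∞ :=
  (isOpen_compl_image_coe.2 ⟨hD.isClosed, hD⟩).mem_nhds infty_notMem_image_coe

theorem continuousAt_onePointExtension_infty [T2Space M] (hφ : IsFlow φ) (t : ℝ) :
    ContinuousAt (fun p : OnePoint M × ℝ => onePointExtension φ p.1 p.2) (∞, t) := by
  refine hasBasis_nhds_infty.tendsto_right_iff.2 fun K ⟨_, hK⟩ => ?_
  have hL : IsCompact ((fun p : M × ℝ => φ p.1 p.2) '' (K ×ˢ Icc (-t - 1) (-t + 1))) :=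
    (hK.prod isCompact_Icc).image hφ.1
  filter_upwards [prod_mem_nhds (compl_image_coe_mem_nhds_infty hL)
    (Ioo_mem_nhds (sub_one_lt t) (lt_add_one t))]
  rintro ⟨_ | a, s⟩ ⟨ha, hs⟩
  · exact Or.inr rfl
  · refine Or.inl (mem_image_of_mem _ fun has => ha (mem_image_of_mem _ ?_))
    exact ⟨(φ a s, -s), ⟨has, by linarith [hs.2], by linarith [hs.1]⟩, hφ.flow_flow_neg a s⟩

theorem IsFlow.onePointExtension [T2Space M] (hφ : IsFlow φ) : IsFlow (onePointExtension φ) := by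
  refine ⟨continuous_iff_continuousAt.2 ?_, ?_, ?_⟩
  · rintro ⟨v, t⟩
    induction v using OnePoint.rec with
    | infty => exact continuousAt_onePointExtension_infty hφ t
    | coe a =>
      exact (isOpenEmbedding_coe.prodMap .id).continuousAt_iff
        (g := fun p : OnePoint M × ℝ => _root_.onePointExtension φ p.1 p.2) |>.1
        ((continuous_coe.comp hφ.1).continuousAt (x := (a, t)))
  · intro v
    induction v using OnePoint.rec with
    | infty => rfl
    | coe a => simp [hφ.2.1]
  · intro v s t
    induction v using OnePoint.rec with
    | infty => rfl
    | coe a => simp [hφ.2.2]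

theorem coe_mem_negOmegaLimitSet_onePointExtension {x z : M} :
    (z : OnePoint M) ∈ negOmegaLimitSet (onePointExtension φ) x ↔ z ∈ negOmegaLimitSet φ x := by
  simp only [mem_negOmegaLimitSet_iff_mapClusterPt]
  exact mapClusterPt_comp.trans isOpenEmbedding_coe.isInducing.mapClusterPt_iff

theorem negOmegaLimitSet_onePointExtension_infty :
    negOmegaLimitSet (onePointExtension φ) ∞ = {∞} := by
  simp only [negOmegaLimitSet, onePointExtension_infty, nonempty_Iic.image_const,
    isClosed_infty.closure_eq]
  exact biInter_const nonempty_Iio _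

end OnePointExtension

section Repeller

variable {M : Type*} [TopologicalSpace M] [T2Space M] {φ : M → ℝ → M}

theorem Dissipative.flowNegStable_onePointExtension [WeaklyLocallyCompactSpace M]
    (hφ : IsFlow φ) (hd : Dissipative φ) : FlowNegStable (onePointExtension φ) {∞} := by
  intro U hU
  rw [nhdsSet_singleton] at hU
  obtain ⟨K, ⟨-, hK⟩, hKU⟩ := hasBasis_nhds_infty.mem_iff.1 hU
  obtain ⟨D, hD, hKD⟩ := hd.exists_isCompact_forall_flow_mem hφ hK
  refine ⟨((↑) '' D)ᶜ, by rw [nhdsSet_singleton]; exact compl_image_coe_mem_nhds_infty hD, ?_⟩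
  intro v hv t ht
  induction v using OnePoint.rec with
  | infty => exact hKU (Or.inr rfl)
  | coe a =>
    exact hKU (Or.inl (mem_image_of_mem _
      (hφ.flow_notMem_of_forall_flow_mem hKD (fun h => hv (mem_image_of_mem _ h)) ht)))

theorem Dissipative.repulsionRegion_onePointExtension_mem_nhdsSet [WeaklyLocallyCompactSpace M]
    (hφ : IsFlow φ) (hd : Dissipative φ) : repulsionRegion (onePointExtension φ) {∞} ∈ 𝓝ˢ {∞} := by
  rw [nhdsSet_singleton]
  obtain ⟨W, hWc, hW⟩ := exists_compact_superset hd.2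
  obtain ⟨D, hD, hWD⟩ := hd.exists_isCompact_forall_flow_mem hφ hWc
  filter_upwards [compl_image_coe_mem_nhds_infty hD] with v hv
  induction v using OnePoint.rec with
  | infty => simp [repulsionRegion, negOmegaLimitSet_onePointExtension_infty]
  | coe x =>
    refine ⟨negOmegaLimitSet_nonempty_of_isCompact isCompact_univ (.of_forall fun _ => trivial),
      fun v hv' => ?_⟩
    induction v using OnePoint.rec with
    | infty => rfl
    | coe z =>
      rw [coe_mem_negOmegaLimitSet_onePointExtension] at hv'
      obtain ⟨w, hw⟩ := hd.1 z
      have hwW : w ∈ interior W := hW (subset_closure (mem_iUnion_of_mem z hw))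
      obtain ⟨t, htW, ht⟩ := ((mem_negOmegaLimitSet_iff_mapClusterPt.1
        (hφ.omegaLimitSet_subset_negOmegaLimitSet hv' hw)).frequently
        (isOpen_interior.mem_nhds hwW) |>.and_eventually (eventually_le_atBot 0)).exists
      exact absurd (interior_subset htW) (hφ.flow_notMem_of_forall_flow_mem hWD
        (fun h => hv (mem_image_of_mem _ h)) ht)

theorem FlowNegStable.exists_isCompact_forall_flow_mem (hφ : IsFlow φ)
    (h : FlowNegStable (onePointExtension φ) {∞}) (x : M) :
    ∃ C, IsCompact C ∧ ∀ t, 0 ≤ t → φ x t ∈ C := by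
  obtain ⟨V, hV, hVx⟩ := h {(x : OnePoint M)}ᶜ
    (by rw [nhdsSet_singleton]; exact isOpen_compl_singleton.mem_nhds (infty_ne_coe x))
  rw [nhdsSet_singleton] at hV
  obtain ⟨C, ⟨-, hC⟩, hCV⟩ := hasBasis_nhds_infty.mem_iff.1 hV
  refine ⟨C, hC, fun t ht => by_contra fun hxt => ?_⟩
  exact hVx _ (hCV (Or.inl (mem_image_of_mem _ hxt))) (-t) (by linarith)
    (by simp [hφ.flow_flow_neg])

theorem Dissipative.of_isRepeller_onePointExtension (hφ : IsFlow φ)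
    (h : IsRepeller (onePointExtension φ) {∞}) : Dissipative φ := by
  obtain ⟨-, -, hstab, hrep⟩ := h
  choose C hC hxC using hstab.exists_isCompact_forall_flow_mem hφ
  have hxC' (x : M) : ∀ᶠ t in atTop, φ x t ∈ C x := (eventually_ge_atTop 0).mono (hxC x)
  rw [nhdsSet_singleton] at hrep
  obtain ⟨K, ⟨hKcl, hK⟩, hKrep⟩ := hasBasis_nhds_infty.mem_iff.1 hrep
  refine ⟨fun x => omegaLimitSet_nonempty_of_isCompact (hC x) (hxC' x),
    hK.of_isClosed_subset isClosed_closure (closure_minimal ?_ hKcl)⟩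
  refine iUnion_subset fun x z hz => by_contra fun hzK => ?_
  have hωx : IsCompact (omegaLimitSet φ x) :=
    (hC x).of_isClosed_subset isClosed_omegaLimitSet ((hC x).isClosed.omegaLimitSet_subset (hxC' x))
  obtain ⟨w, hw⟩ := negOmegaLimitSet_nonempty_of_isCompact hωx
    (.of_forall (hφ.flow_mem_omegaLimitSet hz))
  exact coe_ne_infty w
    ((hKrep (Or.inl (mem_image_of_mem _ hzK))).2 (coe_mem_negOmegaLimitSet_onePointExtension.2 hw))

end Repeller

theorem onePointExtension_isFlow_and_dissipative_iff_infty_isRepeller_general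
    {M : Type*} [MetricSpace M] [LocallyCompactSpace M]
    (φ : M → ℝ → M) (hφ : IsFlow φ) :
    IsFlow (onePointExtension φ) ∧
      (Dissipative φ ↔
        IsRepeller (onePointExtension φ) ({OnePoint.infty} : Set (OnePoint M))) :=
  ⟨hφ.onePointExtension, fun hd => ⟨isCompact_singleton, fun _ => image_singleton,
    hd.flowNegStable_onePointExtension hφ, hd.repulsionRegion_onePointExtension_mem_nhdsSet hφ⟩,
    Dissipative.of_isRepeller_onePointExtension hφ⟩

/-- The extension of a flow on a noncompact locally compact metric
space `M` to the one-point compactification leaving `∞` fixed is a continuous flow,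
and the original flow is dissipative if and only if `{∞}` is a repeller of the
extended flow. -/
theorem onePointExtension_isFlow_and_dissipative_iff_infty_isRepeller
    {M : Type*} [MetricSpace M] [LocallyCompactSpace M] [NoncompactSpace M]
    (φ : M → ℝ → M) (hφ : IsFlow φ) :
    IsFlow (onePointExtension φ) ∧
      (Dissipative φ ↔
        IsRepeller (onePointExtension φ) ({OnePoint.infty} : Set (OnePoint M))) :=
  onePointExtension_isFlow_and_dissipative_iff_infty_isRepeller_general φ hφ
end

section
/- Let φ_λ : M × ℝ → M, λ ∈ [0,1], be a parametrized family of flows on a locally compact metric space M and let (K_λ)_{λ∈[0,1]} be a continuation, where each K_λ is an isolated invariant compactum of φ_λ. Then the closure of ⋃_{λ∈[0,1]} K_λ is compact. -/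
open Set Metric Filter Topology Bornology

/-- If `(K_λ)_{λ∈[0,1]}` is a continuation of isolated invariant
compacta of a parametrized family of flows on a locally compact metric space, then the
closure of `⋃_{λ∈[0,1]} K_λ` is compact. -/
theorem continuation_union_closure_isCompact
    {M : Type*} [MetricSpace M] [LocallyCompactSpace M]
    (φ : ℝ → M → ℝ → M) (hφ : IsParamFlow φ)
    (K : ℝ → Set M) (hK : IsContinuation φ (Icc 0 1) K) :
    IsCompact (closure (⋃ l ∈ Icc (0 : ℝ) 1, K l)) := by
  obtain ⟨hiso, hcont⟩ := hK
  have key : ∀ l₀ ∈ Icc (0:ℝ) 1, ∃ N : Set M, IsCompact N ∧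
      ∃ δ > 0, ∀ l ∈ Icc (0:ℝ) 1, |l - l₀| < δ → K l ⊆ N := by
    intro l₀ hl₀
    obtain ⟨_, _, N, hN⟩ := hiso l₀ hl₀
    obtain ⟨δ, hδ, h⟩ := hcont l₀ hl₀ N hN
    exact ⟨N, hN.1, δ, hδ, fun l hl hd => ((h l hl hd).2.1).trans interior_subset⟩
  choose! N hNc δ hδ hsub using key
  have hcov : Icc (0:ℝ) 1 ⊆ ⋃ l₀ ∈ Icc (0:ℝ) 1, Metric.ball l₀ (δ l₀) := by
    intro l hl
    exact mem_biUnion hl (Metric.mem_ball_self (hδ l hl))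
  obtain ⟨t, hts, htfin, htcov⟩ := isCompact_Icc.elim_finite_subcover_image
    (fun l₀ hl₀ => Metric.isOpen_ball) hcov
  have hC : IsCompact (⋃ l₀ ∈ t, N l₀) :=
    htfin.isCompact_biUnion (fun l₀ hl₀ => hNc l₀ (hts hl₀))
  have hsub' : (⋃ l ∈ Icc (0:ℝ) 1, K l) ⊆ ⋃ l₀ ∈ t, N l₀ := by
    intro x hx
    obtain ⟨l, hl, hxl⟩ := mem_iUnion₂.1 hx
    obtain ⟨l₀, hl₀t, hlball⟩ := mem_iUnion₂.1 (htcov hl)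
    rw [Metric.mem_ball, Real.dist_eq] at hlball
    exact mem_biUnion hl₀t (hsub l₀ (hts hl₀t) l hl hlball hxl)
  exact hC.of_isClosed_subset isClosed_closure (closure_minimal hsub' hC.isClosed)
end

section
/- Let n ≥ 2 and let φ_λ : ℝⁿ × ℝ → ℝⁿ, λ ∈ [0,1], be a coercive family of dissipative flows, K_0 the global attractor of φ_0, and (K_λ)_{λ∈[0,λ₁]} a continuation of K_0 with each K_λ (λ > 0) an attractor of φ_λ. Then there exists λ₀ > 0 such that for 0 < λ < λ₀ the isolated invariant compactum C_λ = ℝⁿ ∖ (A_λ(K_λ) ∪ R_λ), where R_λ = {x : ‖φ_λ(x,t)‖ → ∞ as t → −∞}, satisfies: (a) every point x of the unbounded component of ℝⁿ ∖ C_λ has ∅ ≠ ω_λ(x) ⊂ C_λ, and the attraction is uniform, i.e. for every neighborhood V of C_λ and every compact set S contained in the unbounded component there exists T > 0 with φ_λ(x,t) ∈ V for all x ∈ S and t ≥ T; (b) every point x of the bounded component with x ∉ K_λ has ∅ ≠ ω*_λ(x) ⊂ C_λ. -/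
open Set Metric Filter Topology Bornology

section AuxLemmas

variable {E : Type*} [NormedAddCommGroup E] {ψ : E → ℝ → E}

lemma auxContX (hc : Continuous fun p : E × ℝ => ψ p.1 p.2) (t : ℝ) :
    Continuous fun x : E => ψ x t :=
  hc.comp (continuous_id.prodMk continuous_const)

lemma auxContT (hc : Continuous fun p : E × ℝ => ψ p.1 p.2) (x : E) :
    Continuous fun t : ℝ => ψ x t :=
  hc.comp (continuous_const.prodMk continuous_id)

lemma mem_omega_iff {x y : E} :
    y ∈ omegaLimitSet ψ x ↔ ∀ t : ℝ, 0 < t → y ∈ closure (ψ x '' Ici t) := by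
  simp [omegaLimitSet, mem_Ioi]

lemma mem_negOmega_iff {x y : E} :
    y ∈ negOmegaLimitSet ψ x ↔ ∀ t : ℝ, t < 0 → y ∈ closure (ψ x '' Iic t) := by
  simp [negOmegaLimitSet, mem_Iio]

lemma omega_closure_tail {x y : E} (hy : y ∈ omegaLimitSet ψ x) (u : ℝ) :
    y ∈ closure (ψ x '' Ici u) :=
  closure_mono (image_mono (Ici_subset_Ici.2 (le_max_left u 1)))
    (mem_omega_iff.1 hy (max u 1) (lt_of_lt_of_le one_pos (le_max_right u 1)))

lemma negOmega_closure_tail {x y : E} (hy : y ∈ negOmegaLimitSet ψ x) (u : ℝ) :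
    y ∈ closure (ψ x '' Iic u) :=
  closure_mono (image_mono (Iic_subset_Iic.2 (min_le_left u (-1))))
    (mem_negOmega_iff.1 hy (min u (-1))
      (lt_of_le_of_lt (min_le_right u (-1)) (by norm_num)))

lemma omega_inv (hc : Continuous fun p : E × ℝ => ψ p.1 p.2)
    (hadd : ∀ x s t, ψ (ψ x s) t = ψ x (s + t)) {x y : E}
    (hy : y ∈ omegaLimitSet ψ x) (s : ℝ) : ψ y s ∈ omegaLimitSet ψ x := by
  rw [mem_omega_iff]
  intro t ht
  have h1 : y ∈ closure (ψ x '' Ici (t - s)) := omega_closure_tail hy _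
  have h2 : (fun z => ψ z s) '' (ψ x '' Ici (t - s)) ⊆ ψ x '' Ici t := by
    rintro _ ⟨_, ⟨τ, hτ, rfl⟩, rfl⟩
    exact ⟨τ + s, mem_Ici.2 (by linarith [mem_Ici.1 hτ]), (hadd x τ s).symm⟩
  have h3 : ψ y s ∈ closure ((fun z => ψ z s) '' (ψ x '' Ici (t - s))) :=
    (image_closure_subset_closure_image (auxContX hc s)) ⟨y, h1, rfl⟩
  exact closure_mono h2 h3

lemma negOmega_inv (hc : Continuous fun p : E × ℝ => ψ p.1 p.2)
    (hadd : ∀ x s t, ψ (ψ x s) t = ψ x (s + t)) {x y : E}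
    (hy : y ∈ negOmegaLimitSet ψ x) (s : ℝ) : ψ y s ∈ negOmegaLimitSet ψ x := by
  rw [mem_negOmega_iff]
  intro t ht
  have h1 : y ∈ closure (ψ x '' Iic (t - s)) := negOmega_closure_tail hy _
  have h2 : (fun z => ψ z s) '' (ψ x '' Iic (t - s)) ⊆ ψ x '' Iic t := by
    rintro _ ⟨_, ⟨τ, hτ, rfl⟩, rfl⟩
    exact ⟨τ + s, mem_Iic.2 (by linarith [mem_Iic.1 hτ]), (hadd x τ s).symm⟩
  have h3 : ψ y s ∈ closure ((fun z => ψ z s) '' (ψ x '' Iic (t - s))) :=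
    (image_closure_subset_closure_image (auxContX hc s)) ⟨y, h1, rfl⟩
  exact closure_mono h2 h3

lemma omega_shift (hadd : ∀ x s t, ψ (ψ x s) t = ψ x (s + t)) (x : E) (s : ℝ) :
    omegaLimitSet ψ (ψ x s) = omegaLimitSet ψ x := by
  have htail : ∀ t : ℝ, ψ (ψ x s) '' Ici t = ψ x '' Ici (s + t) := by
    intro t; ext w
    constructor
    · rintro ⟨τ, hτ, rfl⟩
      exact ⟨s + τ, mem_Ici.2 (by linarith [mem_Ici.1 hτ]), (hadd x s τ).symm⟩
    · rintro ⟨u, hu, rfl⟩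
      refine ⟨u - s, mem_Ici.2 (by linarith [mem_Ici.1 hu]), ?_⟩
      rw [hadd]
      congr 1
      ring
  ext y
  simp only [mem_omega_iff]
  constructor
  · intro h t ht
    have h2 : y ∈ closure (ψ (ψ x s) '' Ici (max (t - s) 1)) :=
      h _ (lt_of_lt_of_le one_pos (le_max_right _ _))
    rw [htail] at h2
    exact closure_mono (image_mono (Ici_subset_Ici.2
      (by linarith [le_max_left (t - s) (1 : ℝ)]))) h2
  · intro h t ht
    rw [htail]
    exact omega_closure_tail (mem_omega_iff.2 h) (s + t)

lemma attraction_shift (hadd : ∀ x s t, ψ (ψ x s) t = ψ x (s + t)) {K : Set E}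
    (x : E) (s : ℝ) :
    ψ x s ∈ attractionRegion ψ K ↔ x ∈ attractionRegion ψ K := by
  unfold attractionRegion
  simp only [mem_setOf_eq, omega_shift hadd]

lemma attraction_open (hc : Continuous fun p : E × ℝ => ψ p.1 p.2)
    (hadd : ∀ x s t, ψ (ψ x s) t = ψ x (s + t)) {K : Set E}
    (hK : attractionRegion ψ K ∈ nhdsSet K) : IsOpen (attractionRegion ψ K) := by
  rw [isOpen_iff_forall_mem_open]
  intro x hx
  obtain ⟨y, hyω⟩ := hx.1
  have hyU : y ∈ interior (attractionRegion ψ K) :=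
    subset_interior_iff_mem_nhdsSet.mpr hK (hx.2 hyω)
  have hcl : y ∈ closure (ψ x '' Ici 1) := omega_closure_tail hyω 1
  rw [_root_.mem_closure_iff] at hcl
  obtain ⟨w, hwint, hwim⟩ := hcl _ isOpen_interior hyU
  obtain ⟨τ, hτ, rfl⟩ := hwim
  refine ⟨(fun z => ψ z τ) ⁻¹' interior (attractionRegion ψ K), ?_, ?_, ?_⟩
  · intro z hz
    exact (attraction_shift hadd z τ).mp (interior_subset hz)
  · exact IsOpen.preimage (auxContX hc τ) isOpen_interior
  · exact hwint

lemma negOmega_nonempty [ProperSpace E] {x : E}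
    (hbdd : IsBounded (ψ x '' Iic 0)) : (negOmegaLimitSet ψ x).Nonempty := by
  have heq : negOmegaLimitSet ψ x = ⋂ t : Iio (0 : ℝ), closure (ψ x '' Iic t) := by
    rw [negOmegaLimitSet, biInter_eq_iInter]
  rw [heq]
  have : Nonempty (Iio (0 : ℝ)) := ⟨⟨-1, by norm_num⟩⟩
  apply IsCompact.nonempty_iInter_of_directed_nonempty_isCompact_isClosed
  · intro a b
    refine ⟨⟨min a.1 b.1, mem_Iio.2 (lt_of_le_of_lt (min_le_left _ _) (mem_Iio.1 a.2))⟩, ?_, ?_⟩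
    · exact closure_mono (image_mono (Iic_subset_Iic.2 (min_le_left _ _)))
    · exact closure_mono (image_mono (Iic_subset_Iic.2 (min_le_right _ _)))
  · intro t
    exact ⟨ψ x t.1, subset_closure ⟨t.1, mem_Iic.2 le_rfl, rfl⟩⟩
  · intro t
    exact (hbdd.subset (image_mono (Iic_subset_Iic.2 t.2.le))).closure.isCompact_closure.of_isClosed_subset
      isClosed_closure (by rw [closure_closure])
  · intro t
    exact isClosed_closure

lemma tail_visit {x : E} {R0 : ℝ}
    (hne : (omegaLimitSet ψ x).Nonempty)
    (hR0 : ∀ z ∈ omegaLimitSet ψ x, ‖z‖ ≤ R0) (u : ℝ) :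
    ∃ t : ℝ, u ≤ t ∧ ‖ψ x t‖ < R0 + 1 := by
  obtain ⟨y, hy⟩ := hne
  have hcl := omega_closure_tail hy u
  rw [Metric.mem_closure_iff] at hcl
  obtain ⟨w, hw, hdist⟩ := hcl 1 one_pos
  obtain ⟨τ, hτ, rfl⟩ := hw
  refine ⟨τ, hτ, ?_⟩
  have h1 : ‖ψ x τ‖ - ‖y‖ ≤ ‖ψ x τ - y‖ := norm_sub_norm_le _ _
  have h2 : dist y (ψ x τ) = ‖ψ x τ - y‖ := by rw [dist_eq_norm, norm_sub_rev]
  have h3 := hR0 y hy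
  linarith [hdist, h2 ▸ hdist]

lemma uniform_forward_bound [ProperSpace E]
    (hc : Continuous fun p : E × ℝ => ψ p.1 p.2) (h0 : ∀ x, ψ x 0 = x)
    (hadd : ∀ x s t, ψ (ψ x s) t = ψ x (s + t))
    (hdiss : Dissipative ψ) {S : Set E} (hS : IsBounded S) :
    ∃ M : ℝ, ∀ x ∈ S, ∀ t : ℝ, 0 ≤ t → ‖ψ x t‖ ≤ M := by
  obtain ⟨Z, hZ⟩ := isBounded_iff_forall_norm_le.1 hS
  obtain ⟨R0, hR0⟩ := isBounded_iff_forall_norm_le.1 hdiss.2.isBounded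
  set R1 : ℝ := max Z (R0 + 1) + 1 with hR1def
  have hZR1 : Z ≤ R1 := by
    have := le_max_left Z (R0 + 1); linarith
  have hR0R1 : R0 + 2 ≤ R1 := by
    have := le_max_right Z (R0 + 1); linarith
  by_contra hcon
  push_neg at hcon
  choose z hzS s hs hbig using fun j : ℕ => hcon (R1 + j)
  have hEfact : ∀ j : ℕ, ∃ σ : ℝ, (0 ≤ σ ∧ σ ≤ s j ∧ ‖ψ (z j) σ‖ ≤ R1) ∧
      ∀ t, σ < t → t ≤ s j → R1 < ‖ψ (z j) t‖ := by
    intro j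
    set Ej : Set ℝ := Icc 0 (s j) ∩ {t : ℝ | ‖ψ (z j) t‖ ≤ R1} with hEj
    have hclosed : IsClosed Ej :=
      isClosed_Icc.inter (isClosed_le (auxContT hc (z j)).norm continuous_const)
    have hcpt : IsCompact Ej := isCompact_Icc.of_isClosed_subset hclosed inter_subset_left
    have hne : Ej.Nonempty := by
      refine ⟨0, ⟨le_refl 0, hs j⟩, ?_⟩
      simp only [mem_setOf_eq, h0]
      exact le_trans (hZ _ (hzS j)) hZR1
    have hmem := hcpt.sSup_mem hne
    obtain ⟨⟨hσ0, hσs⟩, hσn⟩ := hmem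
    refine ⟨sSup Ej, ⟨hσ0, hσs, hσn⟩, ?_⟩
    intro t h1 h2
    by_contra h3
    push_neg at h3
    have : t ∈ Ej := ⟨⟨le_trans hσ0 h1.le, h2⟩, h3⟩
    exact absurd (le_csSup hcpt.bddAbove this) (not_le.2 h1)
  choose σ hσ hgt using hEfact
  set p : ℕ → E := fun j => ψ (z j) (σ j) with hp
  set d : ℕ → ℝ := fun j => s j - σ j with hd
  have hpnorm : ∀ j, p j ∈ closedBall (0 : E) R1 := by
    intro j
    rw [mem_closedBall_zero_iff]
    exact (hσ j).2.2
  have hend : ∀ j : ℕ, R1 + j < ‖ψ (p j) (d j)‖ := by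
    intro j
    have h1 : σ j + (s j - σ j) = s j := by ring
    show R1 + j < ‖ψ (ψ (z j) (σ j)) (s j - σ j)‖
    rw [hadd, h1]
    exact hbig j
  have hgrow : ∀ T : ℝ, 0 ≤ T → ∃ J : ℕ, ∀ j ≥ J, T < d j := by
    intro T hT
    obtain ⟨MT, hMT⟩ := isBounded_iff_forall_norm_le.1
      (((isCompact_closedBall (0 : E) R1).prod isCompact_Icc).image hc).isBounded
    obtain ⟨J, hJ⟩ := exists_nat_gt (MT - R1)
    refine ⟨J, fun j hj => ?_⟩
    by_contra hdj
    push_neg at hdj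
    have hmem : ψ (p j) (d j) ∈
        (fun q : E × ℝ => ψ q.1 q.2) '' (closedBall (0 : E) R1 ×ˢ Icc 0 T) :=
      ⟨(p j, d j), ⟨hpnorm j, ⟨sub_nonneg.2 (hσ j).2.1, hdj⟩⟩, rfl⟩
    have h1 := hMT _ hmem
    have h2 : (j : ℝ) < MT - R1 := by linarith [hend j]
    have h3 : (J : ℝ) ≤ (j : ℝ) := Nat.cast_le.2 hj
    linarith
  obtain ⟨pinf, -, k, hk, hpk⟩ :=
    tendsto_subseq_of_bounded (isBounded_closedBall (x := (0 : E)) (r := R1)) hpnorm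
  have hclaim : ∀ t : ℝ, 0 < t → R1 ≤ ‖ψ pinf t‖ := by
    intro t ht
    obtain ⟨J, hJ⟩ := hgrow t ht.le
    have htend : Tendsto (fun i => ‖ψ ((p ∘ k) i) t‖) atTop (𝓝 ‖ψ pinf t‖) :=
      (((auxContX hc t).tendsto pinf).comp hpk).norm
    refine ge_of_tendsto htend ?_
    filter_upwards [eventually_ge_atTop J] with i hi
    have hkJ : J ≤ k i := le_trans hi hk.le_apply
    have hdk := hJ (k i) hkJ
    have h1 := hgt (k i) (σ (k i) + t) (by linarith) (by simp only [hd] at hdk; linarith)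
    have h2 : ψ ((p ∘ k) i) t = ψ (z (k i)) (σ (k i) + t) := by
      show ψ (ψ (z (k i)) (σ (k i))) t = _
      rw [hadd]
    rw [h2]
    exact h1.le
  obtain ⟨t, ht1, htlt⟩ := tail_visit (hdiss.1 pinf)
    (fun w hw => hR0 w (subset_closure (mem_iUnion.2 ⟨pinf, hw⟩))) 1
  have h1 := hclaim t (lt_of_lt_of_le one_pos ht1)
  linarith

end AuxLemmas

/-- In the setting of a coercive family of dissipative flows on `ℝⁿ`
(`n ≥ 2`), for small `λ > 0` the set `C_λ = ℝⁿ ∖ (A_λ(K_λ) ∪ R_λ)` uniformly attracts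
all the points of the unbounded component of its complement and repels all the points
of the bounded one which are not in `K_λ`. -/
theorem coercive_complementarySet_attracts_repels {n : ℕ} (hn : 2 ≤ n)
    (φ : ℝ → EuclideanSpace ℝ (Fin n) → ℝ → EuclideanSpace ℝ (Fin n))
    (hφ : IsParamFlow φ)
    (hdiss : ∀ l ∈ Icc (0 : ℝ) 1, Dissipative (φ l))
    (hcoer : CoerciveFamily φ)
    (lam1 : ℝ) (hlam1 : lam1 ∈ Ioc (0 : ℝ) 1)
    (K : ℝ → Set (EuclideanSpace ℝ (Fin n)))
    (hcont : IsContinuation φ (Icc 0 lam1) K)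
    (hK0 : IsGlobalAttractor (φ 0) (K 0))
    (hattr : ∀ l ∈ Ioc (0 : ℝ) lam1, IsAttractor (φ l) (K l)) :
    ∃ lam0, 0 < lam0 ∧ lam0 ≤ lam1 ∧ ∀ l, 0 < l → l < lam0 →
      (∀ x ∈ (complementarySet φ K l)ᶜ,
        ¬ IsBounded (connectedComponentIn ((complementarySet φ K l)ᶜ) x) →
          (omegaLimitSet (φ l) x).Nonempty ∧
            omegaLimitSet (φ l) x ⊆ complementarySet φ K l) ∧
      (∀ V ∈ nhdsSet (complementarySet φ K l),
        ∀ S : Set (EuclideanSpace ℝ (Fin n)), IsCompact S →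
          S ⊆ (complementarySet φ K l)ᶜ →
          (∀ x ∈ S, ¬ IsBounded (connectedComponentIn ((complementarySet φ K l)ᶜ) x)) →
          ∃ T > 0, ∀ x ∈ S, ∀ t ≥ T, φ l x t ∈ V) ∧
      (∀ x ∈ (complementarySet φ K l)ᶜ,
        IsBounded (connectedComponentIn ((complementarySet φ K l)ᶜ) x) →
          x ∉ K l →
            (negOmegaLimitSet (φ l) x).Nonempty ∧
              negOmegaLimitSet (φ l) x ⊆ complementarySet φ K l) := by
  obtain ⟨lam0, hlam0pos, hlam0le, hAbdd⟩ := hcoer lam1 hlam1 K hcont hK0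
  refine ⟨lam0, hlam0pos, hlam0le, ?_⟩
  intro l hl0 hllam0
  have hllam1 : l ≤ lam1 := le_trans hllam0.le hlam0le
  have hlI : l ∈ Icc (0 : ℝ) 1 := ⟨hl0.le, le_trans hllam1 hlam1.2⟩
  obtain ⟨hψc, hψ0, hψadd⟩ := hφ.2 l hlI
  have hdl := hdiss l hlI
  obtain ⟨hKcpt, hKinv, hKstab, hKnhds⟩ := hattr l ⟨hl0, hllam1⟩
  have hC : complementarySet φ K l
      = (attractionRegion (φ l) (K l) ∪ escapeRegion φ l)ᶜ := rfl
  have hCc : (complementarySet φ K l)ᶜ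
      = attractionRegion (φ l) (K l) ∪ escapeRegion φ l := by
    rw [hC, compl_compl]
  have hAb : IsBounded (attractionRegion (φ l) (K l)) := hAbdd l hl0 hllam0
  have hAopen : IsOpen (attractionRegion (φ l) (K l)) :=
    attraction_open hψc hψadd hKnhds
  -- points with a bounded backward half-orbit do not escape
  have hnotesc : ∀ x : EuclideanSpace ℝ (Fin n), ∀ M : ℝ,
      (∀ t : ℝ, t ≤ 0 → ‖φ l x t‖ ≤ M) → x ∉ escapeRegion φ l := by
    intro x M hM hx
    have hxT : Tendsto (fun t => ‖φ l x t‖) atBot atTop := hx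
    have h1 : ∀ᶠ t in atBot, M < ‖φ l x t‖ := hxT.eventually (eventually_gt_atTop M)
    obtain ⟨t, ht, hle⟩ := (h1.and (eventually_le_atBot (0 : ℝ))).exists
    exact absurd (hM t hle) (not_le.2 ht)
  -- escape region is invariant
  have hesc_shift : ∀ x ∈ escapeRegion φ l, ∀ s : ℝ, φ l x s ∈ escapeRegion φ l := by
    intro x hx s
    have hxT : Tendsto (fun t => ‖φ l x t‖) atBot atTop := hx
    have hmap : Tendsto (fun t : ℝ => s + t) atBot atBot :=
      tendsto_atBot_add_const_left atBot s tendsto_id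
    have h2 := hxT.comp hmap
    have h3 : (fun t => ‖φ l (φ l x s) t‖) = ((fun t => ‖φ l x t‖) ∘ fun t : ℝ => s + t) := by
      funext u
      simp only [Function.comp_apply, hψadd]
    show Tendsto (fun t => ‖φ l (φ l x s) t‖) atBot atTop
    rw [h3]
    exact h2
  -- no escape point is in the closure of the attraction region
  have hRclA : ∀ x ∈ escapeRegion φ l, x ∉ closure (attractionRegion (φ l) (K l)) := by
    intro x hx hxcl
    obtain ⟨MA, hMA⟩ := isBounded_iff_forall_norm_le.1 hAb.closure
    refine hnotesc x MA ?_ hx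
    intro t _
    have h1 : (fun w => φ l w t) '' closure (attractionRegion (φ l) (K l)) ⊆
        closure ((fun w => φ l w t) '' attractionRegion (φ l) (K l)) :=
      image_closure_subset_closure_image (auxContX hψc t)
    have h2 : (fun w => φ l w t) '' attractionRegion (φ l) (K l) ⊆
        attractionRegion (φ l) (K l) := by
      rintro _ ⟨a, ha, rfl⟩
      exact (attraction_shift hψadd a t).mpr ha
    exact hMA _ ((closure_mono h2) (h1 ⟨x, hxcl, rfl⟩))
  -- a point of an unbounded component is not in the attraction region
  have hnotA : ∀ x ∈ attractionRegion (φ l) (K l) ∪ escapeRegion φ l,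
      ¬ IsBounded (connectedComponentIn
        (attractionRegion (φ l) (K l) ∪ escapeRegion φ l) x) →
      x ∉ attractionRegion (φ l) (K l) := by
    intro x hx hub hxA
    apply hub
    have hΓ := isPreconnected_connectedComponentIn
      (x := x) (F := attractionRegion (φ l) (K l) ∪ escapeRegion φ l)
    have hsub := connectedComponentIn_subset
      (attractionRegion (φ l) (K l) ∪ escapeRegion φ l) x
    have hcover : connectedComponentIn
        (attractionRegion (φ l) (K l) ∪ escapeRegion φ l) x ⊆
        attractionRegion (φ l) (K l) ∪ (closure (attractionRegion (φ l) (K l)))ᶜ := by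
      intro w hw
      rcases hsub hw with h | h
      · exact Or.inl h
      · exact Or.inr (hRclA w h)
    have hdisj : Disjoint (attractionRegion (φ l) (K l))
        (closure (attractionRegion (φ l) (K l)))ᶜ :=
      disjoint_compl_right.mono_left subset_closure
    rcases hΓ.subset_or_subset hAopen isClosed_closure.isOpen_compl hdisj hcover with h | h
    · exact hAb.subset h
    · exact absurd (subset_closure hxA) (h (mem_connectedComponentIn hx))
  -- omega limit sets of points outside A avoid A ∪ R
  have hωsubC : ∀ x ∈ attractionRegion (φ l) (K l) ∪ escapeRegion φ l,
      x ∉ attractionRegion (φ l) (K l) →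
      omegaLimitSet (φ l) x ⊆ (attractionRegion (φ l) (K l) ∪ escapeRegion φ l)ᶜ := by
    intro x _ hxA y hy hyAR
    rcases hyAR with hyA | hyR
    · have hcl := omega_closure_tail hy 1
      rw [_root_.mem_closure_iff] at hcl
      obtain ⟨w, hwA, hwim⟩ := hcl _ hAopen hyA
      obtain ⟨τ, _, rfl⟩ := hwim
      exact hxA ((attraction_shift hψadd x τ).mp hwA)
    · obtain ⟨MΩ, hMΩ⟩ := isBounded_iff_forall_norm_le.1 hdl.2.isBounded
      refine hnotesc y MΩ (fun t _ => ?_) hyR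
      have h1 : φ l y t ∈ omegaLimitSet (φ l) x := omega_inv hψc hψadd hy t
      exact hMΩ _ (subset_closure (mem_iUnion.2 ⟨x, h1⟩))
  refine ⟨?_, ?_, ?_⟩
  -- (a) pointwise attraction
  · intro x hx hub
    rw [hCc] at hx hub
    have hxA := hnotA x hx hub
    refine ⟨hdl.1 x, ?_⟩
    rw [hC]
    exact hωsubC x hx hxA
  -- (a) uniform attraction
  · intro V hV S hScpt hSsub hSunbdd
    rw [hCc] at hSsub
    simp only [hCc] at hSunbdd
    have hCV : complementarySet φ K l ⊆ interior V :=
      subset_interior_iff_mem_nhdsSet.mpr hV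
    by_contra hcon
    push_neg at hcon
    choose x hxS t ht hnotV using fun j : ℕ => hcon ((j : ℝ) + 1) (by positivity)
    obtain ⟨bigM, hbigM⟩ := uniform_forward_bound hψc hψ0 hψadd hdl hScpt.isBounded
    have htpos : ∀ j : ℕ, (j : ℝ) + 1 ≤ t j := fun j => ht j
    set w : ℕ → EuclideanSpace ℝ (Fin n) := fun j => φ l (x j) (t j) with hw
    have hwB : ∀ j, w j ∈ closedBall (0 : EuclideanSpace ℝ (Fin n)) bigM := by
      intro j
      rw [mem_closedBall_zero_iff]
      exact hbigM (x j) (hxS j) (t j) (by linarith [htpos j, Nat.cast_nonneg (α := ℝ) j])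
    obtain ⟨z, -, k, hk, hwk⟩ := tendsto_subseq_of_bounded
      (isBounded_closedBall (x := (0 : EuclideanSpace ℝ (Fin n))) (r := bigM)) hwB
    by_cases hzC : z ∈ attractionRegion (φ l) (K l) ∪ escapeRegion φ l
    · rcases hzC with hzA | hzR
      · obtain ⟨i, hiA⟩ := (hwk.eventually (hAopen.eventually_mem hzA)).exists
        have hxkA : x (k i) ∈ attractionRegion (φ l) (K l) :=
          (attraction_shift hψadd (x (k i)) (t (k i))).mp hiA
        exact hnotA (x (k i)) (hSsub (hxS (k i))) (hSunbdd _ (hxS (k i))) hxkA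
      · have hzT : Tendsto (fun u => ‖φ l z u‖) atBot atTop := hzR
        obtain ⟨s, hsbig, hs1⟩ :=
          ((hzT.eventually (eventually_ge_atTop (bigM + 1))).and
            (eventually_le_atBot (-1 : ℝ))).exists
        have htends : Tendsto (fun i => φ l ((w ∘ k) i) s) atTop (𝓝 (φ l z s)) :=
          ((auxContX hψc s).tendsto z).comp hwk
        have hev1 : ∀ᶠ i in atTop, bigM < ‖φ l ((w ∘ k) i) s‖ :=
          htends.norm.eventually (eventually_gt_nhds (by linarith))
        obtain ⟨N, hN⟩ := exists_nat_gt (-s)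
        have hev2 : ∀ᶠ i : ℕ in atTop, 0 ≤ t (k i) + s := by
          filter_upwards [eventually_ge_atTop N] with i hi
          have h1 : (N : ℝ) ≤ (i : ℝ) := Nat.cast_le.2 hi
          have h2 : (i : ℝ) ≤ (k i : ℝ) := Nat.cast_le.2 hk.le_apply
          have := htpos (k i)
          linarith
        obtain ⟨i, hi1, hi2⟩ := (hev1.and hev2).exists
        have heq : φ l ((w ∘ k) i) s = φ l (x (k i)) (t (k i) + s) := by
          show φ l (φ l (x (k i)) (t (k i))) s = _
          rw [hψadd]
        rw [heq] at hi1
        exact absurd (hbigM (x (k i)) (hxS (k i)) _ hi2) (not_le.2 hi1)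
    · have hzCmem : z ∈ complementarySet φ K l := by
        rw [hC]; exact hzC
      obtain ⟨i, hiV⟩ := (hwk.eventually (isOpen_interior.eventually_mem
        (hCV hzCmem))).exists
      exact hnotV (k i) (interior_subset hiV)
  -- (b) repulsion on the bounded components
  · intro x hx hbdd hxK
    rw [hCc] at hx hbdd
    have horbcont : Continuous (fun u : ℝ => φ l x u) := auxContT hψc x
    have horbconn : IsPreconnected (range fun u : ℝ => φ l x u) :=
      (isConnected_range horbcont).isPreconnected
    have horbsub : (range fun u : ℝ => φ l x u) ⊆
        attractionRegion (φ l) (K l) ∪ escapeRegion φ l := by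
      rintro _ ⟨u, rfl⟩
      rcases hx with h | h
      · exact Or.inl ((attraction_shift hψadd x u).mpr h)
      · exact Or.inr (hesc_shift x h u)
    have hxmem : x ∈ range fun u : ℝ => φ l x u := ⟨0, hψ0 x⟩
    have horbbdd : IsBounded (range fun u : ℝ => φ l x u) :=
      hbdd.subset (horbconn.subset_connectedComponentIn hxmem horbsub)
    obtain ⟨Mo, hMo⟩ := isBounded_iff_forall_norm_le.1 horbbdd
    have hxA : x ∈ attractionRegion (φ l) (K l) := by
      rcases hx with h | h
      · exact h
      · exact absurd h (hnotesc x Mo (fun u _ => hMo _ ⟨u, rfl⟩))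
    have hbackbdd : IsBounded (φ l x '' Iic 0) :=
      horbbdd.subset (image_subset_range _ _)
    have hωne : (negOmegaLimitSet (φ l) x).Nonempty := negOmega_nonempty hbackbdd
    refine ⟨hωne, ?_⟩
    intro y hy
    rw [hC]
    intro hyAR
    rcases hyAR with hyA | hyR
    · -- y attracted to K l would force x into K l, contradiction with stability
      have hKne : (K l).Nonempty := by
        obtain ⟨y0, hy0⟩ := hxA.1
        exact ⟨y0, hxA.2 hy0⟩
      have hdpos : 0 < infDist x (K l) :=
        (hKcpt.isClosed.notMem_iff_infDist_pos hKne).1 hxK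
      obtain ⟨Vs, hVsnhds, hVstab⟩ := hKstab (Metric.thickening (infDist x (K l)) (K l))
        (isOpen_thickening.mem_nhdsSet.2 (self_subset_thickening hdpos _))
      obtain ⟨wpt, hwω⟩ := hyA.1
      have hwK : wpt ∈ K l := hyA.2 hwω
      have hwint : wpt ∈ interior Vs := subset_interior_iff_mem_nhdsSet.mpr hVsnhds hwK
      have hcl1 : wpt ∈ closure (φ l y '' Ici 1) := omega_closure_tail hwω 1
      rw [_root_.mem_closure_iff] at hcl1
      obtain ⟨w2, hw2, hw2im⟩ := hcl1 _ isOpen_interior hwint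
      obtain ⟨T, hT, rfl⟩ := hw2im
      have hWopen : IsOpen ((fun zz => φ l zz T) ⁻¹' interior Vs) :=
        IsOpen.preimage (auxContX hψc T) isOpen_interior
      have hcl2 : y ∈ closure (φ l x '' Iic (-(T + 1))) := negOmega_closure_tail hy _
      rw [_root_.mem_closure_iff] at hcl2
      obtain ⟨w3, hw3, hw3im⟩ := hcl2 _ hWopen hw2
      obtain ⟨τ, hτ, rfl⟩ := hw3im
      have hmemV : φ l x (τ + T) ∈ Vs := by
        rw [mem_preimage] at hw3
        rw [← hψadd]
        exact interior_subset hw3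
      have hτT : τ + T ≤ -1 := by
        have := mem_Iic.1 hτ
        linarith
      have h00 : τ + T + -(τ + T) = 0 := by ring
      have hxeq : φ l (φ l x (τ + T)) (-(τ + T)) = x := by
        rw [hψadd, h00, hψ0]
      have hxU0 : φ l (φ l x (τ + T)) (-(τ + T)) ∈
          Metric.thickening (infDist x (K l)) (K l) :=
        hVstab _ hmemV (-(τ + T)) (by linarith)
      have hxU : x ∈ Metric.thickening (infDist x (K l)) (K l) := by
        rw [hxeq] at hxU0
        exact hxU0
      rw [Metric.mem_thickening_iff] at hxU
      obtain ⟨kpt, hkpt, hdist⟩ := hxU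
      exact absurd hdist (not_lt.2 (Metric.infDist_le_dist_of_mem hkpt))
    · -- y escaping contradicts boundedness of the backward orbit closure
      obtain ⟨MB, hMB⟩ := isBounded_iff_forall_norm_le.1 hbackbdd.closure
      refine hnotesc y MB (fun u _ => ?_) hyR
      have h1 : φ l y u ∈ negOmegaLimitSet (φ l) x := negOmega_inv hψc hψadd hy u
      exact hMB _ (negOmega_closure_tail h1 0)
end

section
/- Let φ_λ : ℝⁿ × ℝ → ℝⁿ, λ ∈ [0,1], be a parametrized family of dissipative flows, K_0 the global attractor of φ_0, and (K_λ)_{λ∈[0,λ₁]} a continuation of K_0 with each K_λ (λ > 0) an attractor of φ_λ. Suppose there exists λ₀ > 0 such that for every λ with 0 < λ < λ₀ there is a compact invariant set C_λ ⊂ ℝⁿ ∖ K_λ of φ_λ such that ℝⁿ ∖ C_λ has exactly two connected components, one bounded and one unbounded, and K_λ lies in the bounded component. Then A_λ(K_λ) is bounded for every 0 < λ < λ₀ (in particular, since this holds for some continuation, the family is coercive). -/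
open Set Metric Filter Topology Bornology

/-- If, for each small `λ > 0`, there is a compact invariant set
`C_λ ⊆ ℝⁿ ∖ K_λ` whose complement has exactly two connected components, one bounded
and one unbounded, with `K_λ` in the bounded one, then `A_λ(K_λ)` is bounded for all
small `λ > 0` (hence the family is coercive). -/
theorem separating_set_implies_bounded_attractionRegion {n : ℕ}
    (φ : ℝ → EuclideanSpace ℝ (Fin n) → ℝ → EuclideanSpace ℝ (Fin n))
    (hφ : IsParamFlow φ)
    (hdiss : ∀ l ∈ Icc (0 : ℝ) 1, Dissipative (φ l))
    (lam1 : ℝ) (hlam1 : lam1 ∈ Ioc (0 : ℝ) 1)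
    (K : ℝ → Set (EuclideanSpace ℝ (Fin n)))
    (hcont : IsContinuation φ (Icc 0 lam1) K)
    (hK0 : IsGlobalAttractor (φ 0) (K 0))
    (hattr : ∀ l ∈ Ioc (0 : ℝ) lam1, IsAttractor (φ l) (K l))
    (lam0 : ℝ) (hlam0 : 0 < lam0) (hle : lam0 ≤ lam1)
    (hC : ∀ l, 0 < l → l < lam0 →
      ∃ C : Set (EuclideanSpace ℝ (Fin n)),
        IsCompact C ∧ FlowInvariant (φ l) C ∧ C ⊆ (K l)ᶜ ∧
        ∃ U V : Set (EuclideanSpace ℝ (Fin n)),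
          IsConnected U ∧ IsConnected V ∧ IsBounded U ∧ ¬ IsBounded V ∧
          Disjoint U V ∧ U ∪ V = Cᶜ ∧
          (∀ x ∈ Cᶜ, connectedComponentIn (Cᶜ) x = U ∨ connectedComponentIn (Cᶜ) x = V) ∧
          K l ⊆ U) :
    ∀ l, 0 < l → l < lam0 → IsBounded (attractionRegion (φ l) (K l)) := by
  intro l hl0 hllam0
  obtain ⟨C, hCcomp, hCinv, hCK, U, V, hUconn, hVconn, hUbdd, hVbdd, hdisj, hUV, hcomps, hKU⟩ :=
    hC l hl0 hllam0
  -- l ∈ Icc 0 1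
  have hl01 : l ∈ Icc (0 : ℝ) 1 := ⟨hl0.le, hllam0.le.trans (hle.trans hlam1.2)⟩
  obtain ⟨hφc, hφf⟩ := hφ
  obtain ⟨hcont', h0, hgrp⟩ := hφf l hl01
  have hCclosed : IsClosed C := hCcomp.isClosed
  have hCopen : IsOpen Cᶜ := hCclosed.isOpen_compl
  -- U and V are open
  have hopen : ∀ W, W = U ∨ W = V → IsConnected W → IsOpen W := by
    intro W hW hWconn
    obtain ⟨w, hw⟩ := hWconn.nonempty
    have hwC : w ∈ Cᶜ := by
      rw [← hUV]; rcases hW with rfl | rfl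
      · exact Or.inl hw
      · exact Or.inr hw
    rcases hcomps w hwC with h | h
    · rcases hW with rfl | rfl
      · rw [← h]; exact hCopen.connectedComponentIn
      · exact absurd (mem_connectedComponentIn hwC) (fun hmem => hdisj.le_bot ⟨h ▸ hmem, hw⟩)
    · rcases hW with rfl | rfl
      · exact absurd (mem_connectedComponentIn hwC) (fun hmem => hdisj.le_bot ⟨hw, h ▸ hmem⟩)
      · rw [← h]; exact hCopen.connectedComponentIn
  have hUopen : IsOpen U := hopen U (Or.inl rfl) hUconn
  have hVopen : IsOpen V := hopen V (Or.inr rfl) hVconn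
  -- main inclusion : attractionRegion ⊆ U
  refine hUbdd.subset ?_
  rintro x ⟨hne, hsub⟩
  -- trajectory avoids C
  have htrajC : ∀ t : ℝ, φ l x t ∉ C := by
    intro t ht
    have hfwd : ∀ s : ℝ, t ≤ s → φ l x s ∈ C := by
      intro s hs
      have : φ l (φ l x t) (s - t) ∈ C := by
        have himg := hCinv (s - t)
        rw [← himg]
        exact mem_image_of_mem _ ht
      rwa [hgrp, add_sub_cancel] at this
    have homega : omegaLimitSet (φ l) x ⊆ C := by
      intro y hy
      have hmem : y ∈ closure (φ l x '' Ici (max t 1)) := by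
        have := mem_iInter₂.mp hy (max t 1) (lt_of_lt_of_le one_pos (le_max_right t 1))
        exact this
      refine hCclosed.closure_subset_iff.mpr ?_ hmem
      rintro _ ⟨s, hs, rfl⟩
      exact hfwd s ((le_max_left t 1).trans hs)
    obtain ⟨y, hy⟩ := hne
    exact hCK (homega hy) (hsub hy)
  -- the trajectory is a connected subset of U ∪ V
  have hctr : Continuous (fun t : ℝ => φ l x t) := by
    have : Continuous (fun t : ℝ => ((x, t) : _ × ℝ)) := continuous_const.prodMk continuous_id
    exact hcont'.comp this
  have hT : range (fun t : ℝ => φ l x t) ⊆ U ∪ V := by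
    rw [hUV]
    rintro _ ⟨t, rfl⟩
    exact htrajC t
  have hTconn : IsPreconnected (range fun t : ℝ => φ l x t) :=
    (isConnected_range hctr).isPreconnected
  rcases hTconn.subset_or_subset hUopen hVopen hdisj hT with hTU | hTV
  · have : φ l x 0 ∈ U := hTU (mem_range_self 0)
    rwa [h0] at this
  · -- impossible: omega limit would be in closure V ∩ U
    exfalso
    obtain ⟨y, hy⟩ := hne
    have hyU : y ∈ U := hKU (hsub hy)
    have hyV : y ∈ closure V := by
      have h1 : y ∈ closure (φ l x '' Ici 1) := by
        have := mem_iInter₂.mp hy 1 (mem_Ioi.mpr one_pos)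
        exact this
      refine closure_mono ?_ h1
      rintro _ ⟨s, _, rfl⟩
      exact hTV (mem_range_self s)
    obtain ⟨z, hzU, hzV⟩ := mem_closure_iff_nhds.mp hyV U (hUopen.mem_nhds hyU)
    exact hdisj.le_bot ⟨hzU, hzV⟩
end
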